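/- arXiv:1910.01367 — 8 statements merged into one kernel-verified Lean document; each statement's English description precedes it below -/
import Mathlib

section
/- Let m ≥ 2 and let C be the m×m matrix with first row (n₁, 2(n₁-1), 2(n₁-1), ..., 2(n₁-1)) and, for 2 ≤ i ≤ m, i-th row having first entry nᵢ, diagonal entry 2, and all other entries nᵢ. Then det C = (-1)^{m-1} · Σ_{i=1}^m ( nᵢ · Π_{j≠i} (nⱼ - 2) ). -/
/-!
Write `C = diag(2 - n) + a 𝟙ᵀ`, where `a` agrees with `n` except `a₁ = n₁ + (n₁ - 2)`. For a
rank-one update of any square matrix, expanding the determinant row by row gives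
`det (A + u vᵀ) = det A + vᵀ adj(A) u`, with no invertibility needed; for `A = diag d` this is
`∏ dᵢ + ∑ aᵢ ∏_{j ≠ i} dⱼ`. The term `(n₁ - 2) ∏_{j ≠ 1} dⱼ` coming from the excess in `a₁`
cancels `∏ dᵢ = (2 - n₁) ∏_{j ≠ 1} dⱼ`, and the `m - 1` sign changes `dⱼ = -(nⱼ - 2)` give
`(-1)^(m-1)`.
-/

open Finset

namespace Matrix

variable {n R : Type*} [Fintype n] [DecidableEq n] [CommRing R]

theorem det_updateRow_eq_vecMul_adjugate (A : Matrix n n R) (i : n) (v : n → R) :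
    (A.updateRow i v).det = (v ᵥ* adjugate A) i := by
  rw [← det_transpose, ← updateCol_transpose, ← cramer_apply, cramer_eq_adjugate_mulVec,
    ← adjugate_transpose, mulVec_transpose]

theorem det_add_vecMulVec_eq_add_sum_det_updateRow (A : Matrix n n R) (u v : n → R) :
    (A + vecMulVec u v).det = A.det + ∑ i, u i * (A.updateRow i v).det := by
  suffices ∀ s : Finset n, (A + vecMulVec (fun i => if i ∈ s then u i else 0) v).det =
      A.det + ∑ i ∈ s, u i * (A.updateRow i v).det by simpa using this univ
  intro s
  induction s using Finset.induction_on with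
  | empty => simp [← Pi.zero_def, zero_vecMulVec]
  | insert k s hk ih =>
    set B := A + vecMulVec (fun i => if i ∈ s then u i else 0) v
    have hrow : A + vecMulVec (fun i => if i ∈ insert k s then u i else 0) v =
        B.updateRow k (B k + u k • v) := by
      ext i j
      by_cases hik : i = k
      · subst hik; simp [B, vecMulVec_apply, hk]
      · simp [B, vecMulVec_apply, hik]
    -- rows of `B` differ from those of `A` by multiples of `v`, which the new row `k` absorbs
    have hk_row : (B.updateRow k v).det = (A.updateRow k v).det :=
      det_eq_of_forall_row_eq_smul_add_const (fun i => if i ∈ s then u i else 0) k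
        (if_neg hk) fun i j => by
          by_cases hik : i = k
          · subst hik; simp [hk]
          · simp [B, vecMulVec_apply, hik]
    rw [hrow, det_updateRow_add, det_updateRow_smul, updateRow_eq_self, hk_row, ih,
      sum_insert hk]
    ring

theorem det_add_vecMulVec (A : Matrix n n R) (u v : n → R) :
    (A + vecMulVec u v).det = A.det + v ⬝ᵥ (adjugate A *ᵥ u) := by
  rw [det_add_vecMulVec_eq_add_sum_det_updateRow, dotProduct_mulVec, dotProduct_comm]
  simp only [det_updateRow_eq_vecMul_adjugate, dotProduct]

theorem det_diagonal_add_vecMulVec (d u v : n → R) :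
    (diagonal d + vecMulVec u v).det = ∏ i, d i + ∑ i, v i * u i * ∏ j ∈ univ.erase i, d j := by
  simp only [det_add_vecMulVec, det_diagonal, adjugate_diagonal, mulVec_diagonal, dotProduct]
  exact congrArg _ (sum_congr rfl fun i _ => by ring)

end Matrix

theorem stmt0 (m : ℕ) (hm : 2 ≤ m) (n : Fin m → ℝ)
    (C : Matrix (Fin m) (Fin m) ℝ)
    (hC : ∀ i j : Fin m,
      C i j = if j = (⟨0, by omega⟩ : Fin m) then n i
              else if i = (⟨0, by omega⟩ : Fin m) then 2 * (n i - 1)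
              else if j = i then 2 else n i) :
    C.det = (-1 : ℝ) ^ (m - 1) *
      ∑ i : Fin m, n i * ∏ j ∈ Finset.univ.erase i, (n j - 2) := by
  set z : Fin m := ⟨0, by omega⟩
  have hC_eq : C = Matrix.diagonal (fun i => 2 - n i) +
      Matrix.vecMulVec (n + Pi.single z (n z - 2)) 1 := by
    ext i j
    rw [hC, Matrix.add_apply, Matrix.diagonal_apply, Matrix.vecMulVec_apply, Pi.one_apply,
      mul_one, Pi.add_apply, Pi.single_apply]
    split_ifs <;> subst_vars <;> first | contradiction | ring
  have hsign : ∀ i, ∏ j ∈ univ.erase i, (2 - n j) =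
      (-1) ^ (m - 1) * ∏ j ∈ univ.erase i, (n j - 2) := by
    intro i
    have hcard : #(univ.erase i) = m - 1 := by simp [card_erase_of_mem]
    rw [← hcard, ← prod_const, ← prod_mul_distrib]
    exact prod_congr rfl fun j _ => by ring
  rw [hC_eq, Matrix.det_diagonal_add_vecMulVec, ← mul_prod_erase univ _ (mem_univ z)]
  simp only [Pi.one_apply, one_mul, Pi.add_apply, add_mul, sum_add_distrib, Pi.single_apply,
    ite_mul, zero_mul, sum_ite_eq', mem_univ, if_true, hsign,
    mul_left_comm (n _) ((-1 : ℝ) ^ (m - 1)), ← mul_sum]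
  ring
end

section
/- For every positive integer p and every integer r with 1 ≤ r ≤ 2p, there exist positive integers q₁, ..., q_p such that Σ_{i=1}^p 1/qᵢ = r/2. -/
lemma sum_ite_lt_const (p k : ℕ) (hk : k ≤ p) (x y : ℚ) :
    ∑ i : Fin p, (if (i : ℕ) < k then x else y) = k * x + ((p : ℚ) - k) * y := by
  rw [Fin.sum_univ_eq_sum_range (fun i => if i < k then x else y)]
  rw [← Finset.sum_range_add_sum_Ico _ hk]
  rw [Finset.sum_congr rfl (fun i hi => if_pos (Finset.mem_range.mp hi)),
      Finset.sum_congr rfl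
        (fun i hi => if_neg (not_lt.mpr (Finset.mem_Ico.mp hi).1))]
  simp [Finset.sum_const, Nat.card_Ico, Nat.cast_sub hk, mul_comm]

theorem stmt3 (p : ℕ) (hp : 0 < p) (r : ℕ) (hr1 : 1 ≤ r) (hr2 : r ≤ 2 * p) :
    ∃ q : Fin p → ℕ, (∀ i, 0 < q i) ∧ ∑ i, (1 : ℚ) / (q i : ℚ) = (r : ℚ) / 2 := by
  rcases le_or_gt p r with h | h
  · -- use (r - p) ones and (2p - r) twos
    refine ⟨fun i => if (i : ℕ) < r - p then 1 else 2, fun i => ?_, ?_⟩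
    · dsimp only; split_ifs <;> norm_num
    · have heq : ∀ i : Fin p,
          (1 : ℚ) / ((if (i : ℕ) < r - p then 1 else 2 : ℕ) : ℚ)
          = if (i : ℕ) < r - p then (1 : ℚ) else 1 / 2 := by
        intro i; split_ifs <;> norm_num
      rw [Finset.sum_congr rfl fun i _ => heq i]
      rw [sum_ite_lt_const p (r - p) (by omega) 1 (1 / 2)]
      rw [Nat.cast_sub h]
      ring
  · -- use (r - 1) twos and the rest equal to 2 * (p - r + 1)
    refine ⟨fun i => if (i : ℕ) < r - 1 then 2 else 2 * (p - r + 1),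
        fun i => ?_, ?_⟩
    · dsimp only; split_ifs <;> positivity
    · have heq : ∀ i : Fin p,
          (1 : ℚ) / ((if (i : ℕ) < r - 1 then 2 else 2 * (p - r + 1) : ℕ) : ℚ)
          = if (i : ℕ) < r - 1 then (1 / 2 : ℚ)
            else 1 / (2 * ((p - r + 1 : ℕ) : ℚ)) := by
        intro i; split_ifs <;> push_cast <;> norm_num
      rw [Finset.sum_congr rfl fun i _ => heq i]
      rw [sum_ite_lt_const p (r - 1) (by omega) _ _]
      have hc : ((p - r + 1 : ℕ) : ℚ) = (p : ℚ) - r + 1 := by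
        push_cast [Nat.cast_sub h.le]; ring
      have hrQ : (r : ℚ) < p := by exact_mod_cast h
      have hn : (p : ℚ) - r + 1 ≠ 0 := by nlinarith
      rw [hc, Nat.cast_sub hr1]
      field_simp
      ring
end

section
/- Let m ≥ 2 and G = K_{n₁,...,n_m} with n₁ = ... = n_l = 1 and nᵢ > 2 for l+1 ≤ i ≤ m for some l < m. If det D(G) = 0, then (m+1)/2 < l ≤ (3m+1)/4. -/
open Finset Matrix

theorem stmt6 (m l : ℕ) (hm : 2 ≤ m) (hl : l < m) (n : Fin m → ℕ)
    (h1 : ∀ i : Fin m, (i : ℕ) < l → n i = 1)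
    (h2 : ∀ i : Fin m, l ≤ (i : ℕ) → 2 < n i)
    (D : Matrix ((i : Fin m) × Fin (n i)) ((i : Fin m) × Fin (n i)) ℝ)
    (hD : ∀ u v, D u v = if u = v then 0 else if u.1 = v.1 then 2 else 1)
    (hdet : D.det = 0) :
    ((m : ℚ) + 1) / 2 < (l : ℚ) ∧ (l : ℚ) ≤ (3 * (m : ℚ) + 1) / 4 := by
  obtain ⟨x, hx0, hxD⟩ := (Matrix.exists_mulVec_eq_zero_iff).2 hdet
  set S : ℝ := ∑ u : (i : Fin m) × Fin (n i), x u with hSdef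
  set s : Fin m → ℝ := fun i => ∑ j : Fin (n i), x ⟨i, j⟩ with hsdef
  have hn2 : ∀ i : Fin m, (n i : ℝ) ≠ 2 := by
    intro i
    rcases lt_or_ge (i : ℕ) l with h | h
    · rw [h1 i h]; norm_num
    · have := h2 i h; push_cast; exact_mod_cast (by omega : n i ≠ 2)
  -- key pointwise equation
  have key : ∀ u : (i : Fin m) × Fin (n i), 2 * x u = S + s u.1 := by
    intro u
    have h0 : (D *ᵥ x) u = 0 := by rw [hxD]; rfl
    have hexp : (D *ᵥ x) u = ∑ v, D u v * x v := rfl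
    have hDuv : ∀ v, D u v * x v =
        x v + (if u.1 = v.1 then x v else 0) + (if u = v then (-2) * x v else 0) := by
      intro v
      rw [hD]
      rcases eq_or_ne u v with h | h
      · subst h; simp; ring
      · rcases eq_or_ne u.1 v.1 with h' | h'
        · simp [h, h']; ring
        · simp [h, h']
    rw [hexp] at h0
    simp only [hDuv] at h0
    rw [Finset.sum_add_distrib, Finset.sum_add_distrib] at h0
    have e2 : ∑ v : (i : Fin m) × Fin (n i), (if u.1 = v.1 then x v else 0) = s u.1 := by
      rw [← Finset.univ_sigma_univ, Finset.sum_sigma]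
      have : ∀ i : Fin m, (∑ j : Fin (n i), if u.1 = i then x ⟨i, j⟩ else 0)
          = if u.1 = i then s i else 0 := by
        intro i
        by_cases h : u.1 = i <;> simp [h, hsdef]
      simp only [this]
      simp
    have e3 : ∑ v : (i : Fin m) × Fin (n i), (if u = v then (-2) * x v else 0)
        = (-2) * x u := by simp
    rw [e2, e3] at h0
    rw [hSdef]
    linarith
  -- block sums
  have hblock : ∀ i : Fin m, 2 * s i = (n i : ℝ) * (S + s i) := by
    intro i
    have : 2 * s i = ∑ j : Fin (n i), 2 * x ⟨i, j⟩ := by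
      rw [hsdef]; rw [Finset.mul_sum]
    rw [this]
    have : ∀ j : Fin (n i), 2 * x ⟨i, j⟩ = S + s i := fun j => key ⟨i, j⟩
    simp only [this]
    simp [mul_comm]
    ring
  have hSsum : S = ∑ i : Fin m, s i := by
    rw [hSdef, hsdef, ← Finset.univ_sigma_univ, Finset.sum_sigma]
  -- S ≠ 0
  have hSne : S ≠ 0 := by
    intro hS0
    have hs0 : ∀ i, s i = 0 := by
      intro i
      have := hblock i
      rw [hS0] at this
      have h2' : s i * (2 - (n i : ℝ)) = 0 := by linarith
      rcases mul_eq_zero.1 h2' with h | h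
      · exact h
      · exact absurd (by linarith : (n i : ℝ) = 2) (hn2 i)
    apply hx0
    funext u
    have := key u
    rw [hS0, hs0 u.1] at this
    simpa using by linarith
  -- s i in terms of S
  have hsval : ∀ i : Fin m, s i = (n i : ℝ) * S / (2 - (n i : ℝ)) := by
    intro i
    have h := hblock i
    have hne : (2 - (n i : ℝ)) ≠ 0 := fun h' => hn2 i (by linarith)
    field_simp
    linarith
  -- main equation : ∑ n i / (2 - n i) = 1
  have hmain : ∑ i : Fin m, (n i : ℝ) / (2 - (n i : ℝ)) = 1 := by
    have e : ∀ i : Fin m, (n i : ℝ) / (2 - (n i : ℝ)) * S = s i := by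
      intro i; rw [hsval i]; ring
    have h1' : ∑ i : Fin m, (n i : ℝ) / (2 - (n i : ℝ)) * S = S := by
      rw [Finset.sum_congr rfl (fun i _ => e i), ← hSsum]
    rw [← Finset.sum_mul] at h1'
    exact mul_right_cancel₀ hSne (by rw [one_mul]; exact h1')
  -- split the sum
  set A : Finset (Fin m) := Finset.univ.filter (fun i => (i : ℕ) < l) with hA
  set B : Finset (Fin m) := Finset.univ.filter (fun i => ¬ (i : ℕ) < l) with hB
  have hsplit : ∑ i : Fin m, (n i : ℝ) / (2 - (n i : ℝ))
      = ∑ i ∈ A, (n i : ℝ) / (2 - (n i : ℝ)) + ∑ i ∈ B, (n i : ℝ) / (2 - (n i : ℝ)) := by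
    rw [hA, hB, Finset.sum_filter_add_sum_filter_not]
  have hcardA : A.card = l := by
    have : A = Finset.Iio (⟨l, hl⟩ : Fin m) := by
      ext i
      simp [hA, Finset.mem_Iio, Fin.lt_def]
    rw [this, Fin.card_Iio]
  have hcardB : B.card = m - l := by
    have h := Finset.card_filter_add_card_filter_not
      (s := (Finset.univ : Finset (Fin m))) (p := fun i => (i : ℕ) < l)
    rw [← hA, ← hB, Finset.card_univ, Fintype.card_fin] at h
    omega
  have hAsum : ∑ i ∈ A, (n i : ℝ) / (2 - (n i : ℝ)) = l := by
    rw [Finset.sum_congr rfl (fun i hi => ?_), Finset.sum_const, hcardA, nsmul_eq_mul, mul_one]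
    have hi' : (i : ℕ) < l := by simpa [hA] using hi
    rw [h1 i hi']; norm_num
  set T : ℝ := ∑ i ∈ B, 1 / ((n i : ℝ) - 2) with hT
  have hBmem : ∀ i ∈ B, 2 < n i := by
    intro i hi
    have : ¬ (i : ℕ) < l := by simpa [hB] using hi
    exact h2 i (by omega)
  have hBsum : ∑ i ∈ B, (n i : ℝ) / (2 - (n i : ℝ)) = -((m - l : ℕ) : ℝ) - 2 * T := by
    have e : ∀ i ∈ B, (n i : ℝ) / (2 - (n i : ℝ)) = -1 - 2 * (1 / ((n i : ℝ) - 2)) := by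
      intro i hi
      have h2i := hBmem i hi
      have hpos : (0:ℝ) < (n i : ℝ) - 2 := by
        have : (2:ℝ) < (n i : ℝ) := by exact_mod_cast h2i
        linarith
      have hne1 : ((n i : ℝ) - 2) ≠ 0 := ne_of_gt hpos
      have hne2 : (2 - (n i : ℝ)) ≠ 0 := by intro h; apply hne1; linarith
      field_simp
      ring
    rw [Finset.sum_congr rfl e, Finset.sum_sub_distrib, Finset.sum_const, ← Finset.mul_sum,
      ← hT, hcardB, nsmul_eq_mul]
    ring
  have hTpos : 0 < T := by
    rw [hT]
    apply Finset.sum_pos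
    · intro i hi
      have h2i := hBmem i hi
      have : (0:ℝ) < (n i : ℝ) - 2 := by
        have : (2:ℝ) < (n i : ℝ) := by exact_mod_cast h2i
        linarith
      positivity
    · refine ⟨⟨l, hl⟩, ?_⟩
      simp [hB]
  have hTle : T ≤ ((m - l : ℕ) : ℝ) := by
    calc T ≤ ∑ _i ∈ B, (1:ℝ) := by
          rw [hT]
          refine Finset.sum_le_sum fun i hi => ?_
          have h2i := hBmem i hi
          have h3 : (3:ℝ) ≤ (n i : ℝ) := by exact_mod_cast h2i
          rw [div_le_one (by linarith)]
          linarith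
      _ = ((m - l : ℕ) : ℝ) := by simp [hcardB]
  have heq : (l : ℝ) + (-((m - l : ℕ) : ℝ) - 2 * T) = 1 := by
    rw [← hAsum, ← hBsum, ← hsplit, hmain]
  have hml : ((m - l : ℕ) : ℝ) = (m : ℝ) - l := by
    push_cast [Nat.cast_sub hl.le]; ring
  rw [hml] at heq hTle
  have hlt : m + 1 < 2 * l := by
    have h : ((m:ℝ) + 1) < 2 * l := by linarith
    exact_mod_cast h
  have hle : 4 * l ≤ 3 * m + 1 := by
    have h : (4 * l : ℝ) ≤ 3 * (m:ℝ) + 1 := by linarith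
    exact_mod_cast h
  constructor
  · have h : ((m:ℚ) + 1) < 2 * l := by exact_mod_cast hlt
    linarith
  · have h : (4 * l : ℚ) ≤ 3 * (m:ℚ) + 1 := by exact_mod_cast hle
    linarith
end

section
/- With notation as above, for m ≥ 3 and any i with 2 ≤ i ≤ m: (γ_{\hat{n₁,nᵢ}} + 2 α_{\hat{n₁,nᵢ}}) · β_{n₁,...,n_m} + 2 n₁ · α_{\hat{n₁,nᵢ}}² = (2 β_{\hat{nᵢ}} - γ_{\hat{nᵢ}}) · β_{\hat{n₁}}. -/
open Finset

namespace AlphaBeta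

variable {ι R : Type*} [DecidableEq ι] [CommRing R] (n : ι → R) {S : Finset ι} {a b : ι}

def alpha (S : Finset ι) : R := ∏ j ∈ S, (n j - 2)

def gamma (S : Finset ι) : R := ∑ j ∈ S, n j * ∏ k ∈ S.erase j, (n k - 2)

def beta (S : Finset ι) : R := gamma n S + alpha n S

lemma alpha_eq_mul_erase (ha : a ∈ S) : alpha n S = (n a - 2) * alpha n (S.erase a) :=
  (mul_prod_erase S _ ha).symm

lemma gamma_eq_mul_erase (ha : a ∈ S) :
    gamma n S = n a * alpha n (S.erase a) + (n a - 2) * gamma n (S.erase a) := by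
  rw [gamma, gamma, alpha, ← add_sum_erase S _ ha, mul_sum]
  congr 1
  refine sum_congr rfl fun j hj => ?_
  have ha' : a ∈ S.erase j := mem_erase.mpr ⟨(ne_of_mem_erase hj).symm, ha⟩
  rw [← mul_prod_erase _ _ ha', erase_right_comm]
  ring

/-- Both sides are polynomials in `n a`, `n b`, `α_T` and `γ_T` for `T = S \ {a, b}`, once every
set is peeled down to `T` by `alpha_eq_mul_erase` and `gamma_eq_mul_erase`. -/
theorem gamma_add_two_alpha_mul_beta (hab : a ≠ b) (ha : a ∈ S) (hb : b ∈ S) :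
    (gamma n ((S.erase a).erase b) + 2 * alpha n ((S.erase a).erase b)) * beta n S
      + 2 * n a * alpha n ((S.erase a).erase b) ^ 2
    = (2 * beta n (S.erase b) - gamma n (S.erase b)) * beta n (S.erase a) := by
  have hb' : b ∈ S.erase a := mem_erase.mpr ⟨hab.symm, hb⟩
  have ha' : a ∈ S.erase b := mem_erase.mpr ⟨hab, ha⟩
  simp only [beta, alpha_eq_mul_erase n ha, gamma_eq_mul_erase n ha,
    alpha_eq_mul_erase n hb', gamma_eq_mul_erase n hb',
    alpha_eq_mul_erase n ha', gamma_eq_mul_erase n ha', erase_right_comm (s := S) (a := b)]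
  ring

end AlphaBeta

theorem stmt10 (m : ℕ) (hm : 3 ≤ m) (n : Fin m → ℤ) (i : Fin m)
    (hi : i ≠ ⟨0, by omega⟩)
    (α γ β : Finset (Fin m) → ℤ)
    (hα : ∀ S, α S = ∏ j ∈ S, (n j - 2))
    (hγ : ∀ S, γ S = ∑ j ∈ S, n j * ∏ k ∈ S.erase j, (n k - 2))
    (hβ : ∀ S, β S = γ S + α S) :
    (γ ((Finset.univ.erase ⟨0, by omega⟩).erase i)
        + 2 * α ((Finset.univ.erase ⟨0, by omega⟩).erase i)) * β Finset.univ
      + 2 * n ⟨0, by omega⟩ * (α ((Finset.univ.erase ⟨0, by omega⟩).erase i)) ^ 2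
    = (2 * β (Finset.univ.erase i) - γ (Finset.univ.erase i))
        * β (Finset.univ.erase ⟨0, by omega⟩) := by
  obtain rfl : α = AlphaBeta.alpha n := funext hα
  obtain rfl : γ = AlphaBeta.gamma n := funext hγ
  obtain rfl : β = AlphaBeta.beta n := funext hβ
  exact AlphaBeta.gamma_add_two_alpha_mul_beta n (Ne.symm hi) (mem_univ _) (mem_univ _)
end

section
/- Let D be the distance matrix of K_{n₁,...,n_m} and suppose β = Σ_{i=1}^m nᵢ Π_{j≠i}(nⱼ-2) + Π_{i=1}^m (nᵢ-2) ≠ 0. Then D is invertible, and in the m×m block partition according to the parts, the (i,i) block of D⁻¹ is ((2β_{\hat{nᵢ}} - γ_{\hat{nᵢ}})/(2β)) J_{nᵢ} - (1/2) I_{nᵢ}, and for i ≠ j the (i,j) block is -(Π_{l≠i,j}(n_l-2)/β) J_{nᵢ×nⱼ}. -/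
open Finset Matrix

/-!
Write `D = J + B - 2I`, where `B` is the block-diagonal all-ones matrix. Matrices whose entries
are constant on each block, up to a scalar added on the diagonal of each diagonal block, are closed
under multiplication, and the block constants of a product are given by an `m × m` product
weighted by the part sizes `nₖ`. So `D X = I` for the claimed `X` reduces to `m × m` identities,
which follow from expanding `β` along one part:
`β = nⱼ ∏_{l ≠ j} (n_l - 2) + (nⱼ - 2) β_{\hat{nⱼ}}`.
-/

namespace CompleteMultipartite

variable {ι : Type*} [DecidableEq ι]

section BlockPattern

variable {R : Type*} [Semiring R] (n : ι → ℕ)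

def blockPattern (a : ι → ι → R) (d : ι → R) :
    Matrix ((i : ι) × Fin (n i)) ((i : ι) × Fin (n i)) R :=
  fun u v => a u.1 v.1 + if u = v then d u.1 else 0

variable {n}

theorem blockPattern_apply (a : ι → ι → R) (d : ι → R) (u v : (i : ι) × Fin (n i)) :
    blockPattern n a d u v = a u.1 v.1 + if u = v then d u.1 else 0 :=
  rfl

variable [Fintype ι]

theorem blockPattern_mul (a b : ι → ι → R) (d e : ι → R) :
    blockPattern n a d * blockPattern n b e =
      blockPattern n (fun i j => ∑ k, (n k : R) * a i k * b k j + a i j * e j + d i * b i j)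
        (fun i => d i * e i) := by
  ext u v
  simp only [mul_apply, blockPattern_apply, mul_add, add_mul, sum_add_distrib, ite_mul,
    zero_mul, mul_ite, mul_zero, sum_ite_eq, sum_ite_eq', mem_univ, if_true]
  have hblocks : ∑ w : (i : ι) × Fin (n i), a u.1 w.1 * b w.1 v.1 =
      ∑ k, (n k : R) * a u.1 k * b k v.1 := by
    rw [Fintype.sum_sigma]
    simp only [sum_const, card_univ, Fintype.card_fin, nsmul_eq_mul, mul_assoc]
  rw [hblocks]
  by_cases huv : u = v <;> simp only [huv, if_true, if_false, add_zero] <;> abel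

theorem blockPattern_mul_eq_one {a b : ι → ι → R} {d e : ι → R}
    (hoff : ∀ i j, ∑ k, (n k : R) * a i k * b k j + a i j * e j + d i * b i j = 0)
    (hdiag : ∀ i, d i * e i = 1) :
    blockPattern n a d * blockPattern n b e = 1 := by
  ext u v
  rw [blockPattern_mul, blockPattern_apply, hoff, hdiag, one_apply, zero_add]

end BlockPattern

section Entries

variable {K : Type*} [Field K] (x : ι → K)

def gamma (S : Finset ι) : K := ∑ i ∈ S, x i * ∏ j ∈ S.erase i, (x j - 2)

def beta (S : Finset ι) : K := gamma x S + ∏ i ∈ S, (x i - 2)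

variable {x}

theorem gamma_eq_of_mem {S : Finset ι} {j : ι} (hj : j ∈ S) :
    gamma x S = x j * ∏ k ∈ S.erase j, (x k - 2) + (x j - 2) * gamma x (S.erase j) := by
  rw [gamma, gamma, ← add_sum_erase _ _ hj, mul_sum]
  congr 1
  refine sum_congr rfl fun i hi => ?_
  have hji : j ∈ S.erase i := mem_erase.2 ⟨(ne_of_mem_erase hi).symm, hj⟩
  rw [← mul_prod_erase _ _ hji, erase_right_comm]
  ring

theorem beta_eq_of_mem {S : Finset ι} {j : ι} (hj : j ∈ S) :
    beta x S = x j * ∏ k ∈ S.erase j, (x k - 2) + (x j - 2) * beta x (S.erase j) := by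
  rw [beta, beta, gamma_eq_of_mem hj, ← mul_prod_erase _ _ hj]
  ring

variable [Fintype ι] (x)

/-- The constant part of the `(i, j)` block of `D⁻¹`; the diagonal of `D⁻¹` adds `-1/2` to it. -/
def invEntry (i j : ι) : K :=
  if i = j then (2 * beta x (univ.erase i) - gamma x (univ.erase i)) / (2 * beta x univ)
  else -(∏ l ∈ (univ.erase i).erase j, (x l - 2)) / beta x univ

variable {x}

theorem sum_mul_invEntry (j : ι) :
    ∑ k, x k * invEntry x k j = x j * invEntry x j j - gamma x (univ.erase j) / beta x univ := by
  rw [← add_sum_erase _ _ (mem_univ j), sub_eq_add_neg, gamma, sum_div, ← sum_neg_distrib]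
  congr 1
  refine sum_congr rfl fun k hk => ?_
  rw [invEntry, if_neg (ne_of_mem_erase hk), erase_right_comm]
  ring

theorem add_sum_mul_invEntry [NeZero (2 : K)] (hβ : beta x univ ≠ 0) (i j : ι) :
    ∑ k, x k * invEntry x k j + (x i - 2) * invEntry x i j = if i = j then 1 else 1 / 2 := by
  have hrec := beta_eq_of_mem (x := x) (mem_univ j)
  have hβj : beta x (univ.erase j) = gamma x (univ.erase j) + ∏ l ∈ univ.erase j, (x l - 2) := rfl
  rw [sum_mul_invEntry]
  by_cases hij : i = j
  · subst hij
    rw [invEntry, if_pos rfl, if_pos rfl]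
    field_simp
    linear_combination 2 * (x i * hβj - hrec)
  · have hprod : (x i - 2) * ∏ l ∈ (univ.erase i).erase j, (x l - 2) =
        ∏ l ∈ univ.erase j, (x l - 2) := by
      rw [erase_right_comm]
      exact mul_prod_erase _ (fun l => x l - 2) (mem_erase.2 ⟨hij, mem_univ i⟩)
    rw [invEntry, invEntry, if_pos rfl, if_neg hij, if_neg hij]
    field_simp
    linear_combination (x j + 2) * hβj - hrec - 2 * hprod

end Entries

variable [Fintype ι] {K : Type*} [Field K] [NeZero (2 : K)]

theorem blockPattern_mul_invEntry (n : ι → ℕ) (hβ : beta (fun i => (n i : K)) univ ≠ 0) :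
    blockPattern n (fun i j => if i = j then (2 : K) else 1) (fun _ => -2) *
      blockPattern n (invEntry fun i => (n i : K)) (fun _ => -1 / 2) = 1 := by
  refine blockPattern_mul_eq_one (fun i j => ?_) fun _ => by field_simp
  have hsplit : ∑ k, (n k : K) * (if i = k then 2 else 1) * invEntry (fun i => (n i : K)) k j =
      ∑ k, (n k : K) * invEntry (fun i => (n i : K)) k j +
        (n i : K) * invEntry (fun i => (n i : K)) i j := by
    rw [← Fintype.sum_ite_eq i fun k => (n k : K) * invEntry (fun i => (n i : K)) k j,
      ← sum_add_distrib]
    exact sum_congr rfl fun k _ => by split_ifs <;> ring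
  have hquot := add_sum_mul_invEntry hβ i j
  rw [hsplit]
  split_ifs at hquot ⊢ <;> linear_combination (norm := (field_simp; ring)) hquot

end CompleteMultipartite

open CompleteMultipartite

theorem stmt11_general (m : ℕ) (n : Fin m → ℕ)
    (D : Matrix ((i : Fin m) × Fin (n i)) ((i : Fin m) × Fin (n i)) ℝ)
    (hD : ∀ u v, D u v = if u = v then 0 else if u.1 = v.1 then 2 else 1)
    (γ β : Finset (Fin m) → ℝ)
    (hγ : ∀ S, γ S = ∑ i ∈ S, (n i : ℝ) * ∏ j ∈ S.erase i, ((n j : ℝ) - 2))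
    (hβ : ∀ S, β S = γ S + ∏ i ∈ S, ((n i : ℝ) - 2))
    (hβ0 : β Finset.univ ≠ 0) :
    IsUnit D.det ∧
      ∀ u v : (i : Fin m) × Fin (n i),
        D⁻¹ u v =
          if u.1 = v.1 then
            (2 * β (Finset.univ.erase u.1) - γ (Finset.univ.erase u.1))
                / (2 * β Finset.univ)
              - (if u = v then (1 : ℝ) / 2 else 0)
          else
            -(∏ l ∈ (Finset.univ.erase u.1).erase v.1, ((n l : ℝ) - 2))
              / β Finset.univ := by
  obtain rfl : γ = gamma (fun i => (n i : ℝ)) := funext hγ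
  obtain rfl : β = beta (fun i => (n i : ℝ)) := funext hβ
  have hD' : D = blockPattern n (fun i j => if i = j then (2 : ℝ) else 1) (fun _ => -2) := by
    ext u v
    rw [hD, blockPattern_apply]
    by_cases huv : u = v
    · subst huv; norm_num
    · by_cases h : u.1 = v.1 <;> simp [huv, h]
  have hinv := hD' ▸ blockPattern_mul_invEntry n hβ0
  refine ⟨isUnit_det_of_right_inverse hinv, fun u v => ?_⟩
  rw [inv_eq_right_inv hinv, blockPattern_apply, invEntry]
  by_cases huv : u = v
  · subst huv; simp only [↓reduceIte]; ring
  · by_cases h : u.1 = v.1 <;> simp [huv, h]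

theorem stmt11 (m : ℕ) (hm : 2 ≤ m) (n : Fin m → ℕ) (hn : ∀ i, 1 ≤ n i)
    (D : Matrix ((i : Fin m) × Fin (n i)) ((i : Fin m) × Fin (n i)) ℝ)
    (hD : ∀ u v, D u v = if u = v then 0 else if u.1 = v.1 then 2 else 1)
    (γ β : Finset (Fin m) → ℝ)
    (hγ : ∀ S, γ S = ∑ i ∈ S, (n i : ℝ) * ∏ j ∈ S.erase i, ((n j : ℝ) - 2))
    (hβ : ∀ S, β S = γ S + ∏ i ∈ S, ((n i : ℝ) - 2))
    (hβ0 : β Finset.univ ≠ 0) :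
    IsUnit D.det ∧
      ∀ u v : (i : Fin m) × Fin (n i),
        D⁻¹ u v =
          if u.1 = v.1 then
            (2 * β (Finset.univ.erase u.1) - γ (Finset.univ.erase u.1))
                / (2 * β Finset.univ)
              - (if u = v then (1 : ℝ) / 2 else 0)
          else
            -(∏ l ∈ (Finset.univ.erase u.1).erase v.1, ((n l : ℝ) - 2))
              / β Finset.univ :=
  stmt11_general m n D hD γ β hγ hβ hβ0
end

section
/- Let p ≥ 0 and q ≥ 0 be integers. The inequalities p < Σ_{i=1}^{p+q} 1/(nᵢ - 2) < p + 1/2 have a solution in integers n₁,...,n_{p+q} with each nᵢ > 2 if and only if q ≥ 1; moreover, when q ≥ 1 there are infinitely many such solutions. -/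
private def fam (p q k : ℕ) : Fin (p + q) → ℤ :=
  fun i => if (i : ℕ) < p then 3 else ((4 * q + k + 2 : ℕ) : ℤ)

private lemma fam_sum (p q k : ℕ) :
    ∑ i, 1 / ((fam p q k i : ℚ) - 2) = (p : ℚ) + (q : ℚ) * (1 / ((4 * q + k : ℕ) : ℚ)) := by
  simp only [fam, apply_ite (fun z : ℤ => (z : ℚ))]
  rw [Fin.sum_univ_eq_sum_range
    (fun j => 1 / (((if j < p then (3 : ℤ) else ((4 * q + k + 2 : ℕ) : ℤ)) : ℚ) - 2))]
  rw [Finset.range_eq_Ico, ← Finset.sum_Ico_consecutive _ (Nat.zero_le p) (Nat.le_add_right p q)]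
  have h1 : ∑ j ∈ Finset.Ico 0 p,
      1 / (((if j < p then (3 : ℤ) else ((4 * q + k + 2 : ℕ) : ℤ)) : ℚ) - 2) = (p : ℚ) := by
    have e : ∀ j ∈ Finset.Ico 0 p,
        1 / (((if j < p then (3 : ℤ) else ((4 * q + k + 2 : ℕ) : ℤ)) : ℚ) - 2) = (1 : ℚ) := by
      intro j hj
      simp only [Finset.mem_Ico] at hj
      rw [if_pos hj.2]
      norm_num
    rw [Finset.sum_congr rfl e, Finset.sum_const, Nat.card_Ico]
    simp
  have h2 : ∑ j ∈ Finset.Ico p (p + q),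
      1 / (((if j < p then (3 : ℤ) else ((4 * q + k + 2 : ℕ) : ℤ)) : ℚ) - 2)
      = (q : ℚ) * (1 / ((4 * q + k : ℕ) : ℚ)) := by
    have e : ∀ j ∈ Finset.Ico p (p + q),
        1 / (((if j < p then (3 : ℤ) else ((4 * q + k + 2 : ℕ) : ℤ)) : ℚ) - 2)
        = 1 / ((4 * q + k : ℕ) : ℚ) := by
      intro j hj
      simp only [Finset.mem_Ico] at hj
      rw [if_neg (not_lt.mpr hj.1)]
      push_cast
      ring_nf
    rw [Finset.sum_congr rfl e, Finset.sum_const, Nat.card_Ico, Nat.add_sub_cancel_left,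
      nsmul_eq_mul]
  rw [h1, h2]

private lemma fam_mem (p q k : ℕ) (hq : 1 ≤ q) :
    (∀ i, 2 < fam p q k i) ∧
      (p : ℚ) < ∑ i, 1 / ((fam p q k i : ℚ) - 2) ∧
      ∑ i, 1 / ((fam p q k i : ℚ) - 2) < (p : ℚ) + 1 / 2 := by
  refine ⟨fun i => ?_, ?_, ?_⟩
  · unfold fam
    split
    · norm_num
    · have : (4 : ℤ) ≤ 4 * q := by exact_mod_cast Nat.mul_le_mul_left 4 hq
      push_cast
      omega
  · rw [fam_sum]
    have hpos : (0 : ℚ) < ((4 * q + k : ℕ) : ℚ) := by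
      have : 1 ≤ 4 * q + k := by omega
      exact_mod_cast Nat.lt_of_lt_of_le Nat.zero_lt_one this
    have hq' : (0 : ℚ) < (q : ℚ) := by exact_mod_cast hq
    nlinarith [mul_pos hq' (one_div_pos.mpr hpos)]
  · rw [fam_sum]
    have hpos : (0 : ℚ) < ((4 * q + k : ℕ) : ℚ) := by
      have : 1 ≤ 4 * q + k := by omega
      exact_mod_cast Nat.lt_of_lt_of_le Nat.zero_lt_one this
    have hq' : (1 : ℚ) ≤ (q : ℚ) := by exact_mod_cast hq
    have hcast : ((4 * q + k : ℕ) : ℚ) = 4 * (q : ℚ) + (k : ℚ) := by push_cast; ring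
    have hk : (0 : ℚ) ≤ (k : ℚ) := Nat.cast_nonneg k
    have key : (q : ℚ) * (1 / ((4 * q + k : ℕ) : ℚ)) < 1 / 2 := by
      rw [mul_one_div, div_lt_div_iff₀ hpos (by norm_num : (0:ℚ) < 2), hcast]
      nlinarith
    linarith

theorem stmt13 (p q : ℕ) :
    ((∃ n : Fin (p + q) → ℤ, (∀ i, 2 < n i) ∧
        (p : ℚ) < ∑ i, 1 / ((n i : ℚ) - 2) ∧
        ∑ i, 1 / ((n i : ℚ) - 2) < (p : ℚ) + 1 / 2) ↔ 1 ≤ q)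
    ∧ (1 ≤ q →
        {n : Fin (p + q) → ℤ | (∀ i, 2 < n i) ∧
          (p : ℚ) < ∑ i, 1 / ((n i : ℚ) - 2) ∧
          ∑ i, 1 / ((n i : ℚ) - 2) < (p : ℚ) + 1 / 2}.Infinite) := by
  constructor
  · constructor
    · rintro ⟨n, hn, hlt, -⟩
      by_contra hq
      have hq0 : q = 0 := by omega
      subst hq0
      have hbound : ∀ i : Fin (p + 0), 1 / ((n i : ℚ) - 2) ≤ 1 := by
        intro i
        have h1 : (1 : ℚ) ≤ (n i : ℚ) - 2 := by
          have := hn i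
          have : (3 : ℚ) ≤ (n i : ℚ) := by exact_mod_cast this
          linarith
        rw [div_le_one (by linarith)]
        linarith
      have hle : ∑ i : Fin (p + 0), 1 / ((n i : ℚ) - 2) ≤ ∑ _i : Fin (p + 0), (1 : ℚ) :=
        Finset.sum_le_sum (fun i _ => hbound i)
      rw [Finset.sum_const, Finset.card_univ, Fintype.card_fin, nsmul_eq_mul, mul_one] at hle
      push_cast at hle
      linarith
    · intro hq
      exact ⟨fam p q 0, fam_mem p q 0 hq⟩
  · intro hq
    apply Set.infinite_of_injective_forall_mem (f := fun k : ℕ => fam p q k)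
    · intro a b hab
      have hp : p < p + q := by omega
      have := congrFun hab ⟨p, hp⟩
      unfold fam at this
      simp at this
      omega
    · intro k
      exact fam_mem p q k hq
end

section
/- Let p ≥ 0 and q ≥ 0 be integers. The inequalities p + 1/2 < Σ_{i=1}^{p+q} 1/(nᵢ - 2) < p + 1 have a solution in integers n₁,...,n_{p+q} with each nᵢ > 2 if and only if q ≥ 2; moreover, when q ≥ 2 there are infinitely many such solutions. -/
/-!
Every term `1 / (nᵢ - 2)` is at most `1`, and at most `1 / 2` unless `nᵢ = 3`. Hence with `q = 0`
the sum is at most `p`, and with `q = 1` it is either exactly `p + 1` or at most `p + 1 / 2`. For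
`q ≥ 2`, take `p` threes, one four and `q - 1` copies of any `m > 2q`: the sum is
`p + 1 / 2 + (q - 1) / (m - 2)`, strictly inside the interval, and distinct `m` give distinct
solutions.
-/

open Finset

section
variable {ι : Type*} [Fintype ι]

def IsSolution (p : ℕ) (n : ι → ℤ) : Prop :=
  (∀ i, 2 < n i) ∧ (p : ℚ) + 1 / 2 < ∑ i, 1 / ((n i : ℚ) - 2) ∧
    ∑ i, 1 / ((n i : ℚ) - 2) < (p : ℚ) + 1

lemma one_div_sub_two_le_one {m : ℤ} (hm : 2 < m) : 1 / ((m : ℚ) - 2) ≤ 1 := by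
  have : (3 : ℚ) ≤ m := by exact_mod_cast hm
  rw [div_le_one (by linarith)]
  linarith

lemma one_div_sub_two_le_half {m : ℤ} (hm : 3 < m) : 1 / ((m : ℚ) - 2) ≤ 1 / 2 := by
  have : (4 : ℚ) ≤ m := by exact_mod_cast hm
  gcongr
  linarith

omit [Fintype ι] in
lemma sum_one_div_sub_two_le_card {s : Finset ι} {n : ι → ℤ} (hn : ∀ i, 2 < n i) :
    ∑ i ∈ s, 1 / ((n i : ℚ) - 2) ≤ #s := by
  simpa using sum_le_sum fun i (_ : i ∈ s) => one_div_sub_two_le_one (hn i)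

lemma sum_one_div_sub_two_le_card_sub_half [DecidableEq ι] {n : ι → ℤ} (hn : ∀ i, 2 < n i)
    {j : ι} (hj : n j ≠ 3) : ∑ i, 1 / ((n i : ℚ) - 2) ≤ Fintype.card ι - 1 / 2 := by
  have hrest := sum_one_div_sub_two_le_card (s := univ.erase j) hn
  have hj := one_div_sub_two_le_half (lt_of_le_of_ne (hn j) (Ne.symm hj))
  rw [card_erase_of_mem (mem_univ j), card_univ,
    Nat.cast_sub (Fintype.card_pos_iff.2 ⟨j⟩), Nat.cast_one] at hrest
  rw [← add_sum_erase _ _ (mem_univ j)]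
  linarith

lemma sum_one_div_sub_two_notMem_Ioo {n : ι → ℤ} (hn : ∀ i, 2 < n i) :
    ∑ i, 1 / ((n i : ℚ) - 2) ∉ Set.Ioo ((Fintype.card ι : ℚ) - 1 / 2) (Fintype.card ι) := by
  by_cases h : ∀ i, n i = 3
  · norm_num [h]
  · classical
    obtain ⟨j, hj⟩ := not_forall.1 h
    have := sum_one_div_sub_two_le_card_sub_half hn hj
    rw [Set.mem_Ioo]
    intro h'
    linarith [h'.1]
end

lemma two_le_of_isSolution {p q : ℕ} {n : Fin (p + q) → ℤ} (h : IsSolution p n) : 2 ≤ q := by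
  obtain ⟨hn, hlo, hhi⟩ := h
  by_contra! hq
  interval_cases q
  · have := sum_one_div_sub_two_le_card (s := univ) hn
    rw [card_univ, Fintype.card_fin] at this
    linarith [show ((p + 0 : ℕ) : ℚ) = p from rfl]
  · apply sum_one_div_sub_two_notMem_Ioo hn
    simp only [Fintype.card_fin, Set.mem_Ioo]
    push_cast
    constructor <;> linarith

def solutionFamily (p r : ℕ) (m : ℤ) : Fin (p + (r + 1)) → ℤ :=
  Fin.append (fun _ => 3) (Fin.cons 4 fun _ => m)

lemma sum_solutionFamily (p r : ℕ) (m : ℤ) :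
    ∑ i, 1 / ((solutionFamily p r m i : ℚ) - 2) = p + 1 / 2 + r / (m - 2) := by
  simp [solutionFamily, Fin.sum_univ_add, Fin.sum_univ_succ]
  norm_num
  ring

lemma isSolution_solutionFamily {p r : ℕ} {m : ℤ} (hr : 1 ≤ r) (hm : 2 * r + 2 < m) :
    IsSolution p (solutionFamily p r m) := by
  have hr' : (1 : ℚ) ≤ r := by exact_mod_cast hr
  have hm' : 2 * (r : ℚ) + 2 < m := by exact_mod_cast hm
  refine ⟨?_, ?_, ?_⟩
  · intro i
    refine Fin.addCases (fun _ => ?_) (Fin.cases ?_ fun _ => ?_) i <;>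
      simp [solutionFamily]; omega
  · rw [sum_solutionFamily]
    have : 0 < (r : ℚ) / (m - 2) := div_pos (by linarith) (by linarith)
    linarith
  · rw [sum_solutionFamily]
    have : (r : ℚ) / (m - 2) < 1 / 2 := by rw [div_lt_iff₀ (by linarith)]; linarith
    linarith

lemma solutionFamily_injective (p : ℕ) {r : ℕ} (hr : 1 ≤ r) :
    Function.Injective (solutionFamily p r) := by
  intro m m' h
  have := congrFun h (Fin.natAdd p (Fin.succ ⟨0, hr⟩))
  simpa only [solutionFamily, Fin.append_right, Fin.cons_succ] using this

theorem stmt14 (p q : ℕ) :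
    ((∃ n : Fin (p + q) → ℤ, (∀ i, 2 < n i) ∧
        (p : ℚ) + 1 / 2 < ∑ i, 1 / ((n i : ℚ) - 2) ∧
        ∑ i, 1 / ((n i : ℚ) - 2) < (p : ℚ) + 1) ↔ 2 ≤ q)
    ∧ (2 ≤ q →
        {n : Fin (p + q) → ℤ | (∀ i, 2 < n i) ∧
          (p : ℚ) + 1 / 2 < ∑ i, 1 / ((n i : ℚ) - 2) ∧
          ∑ i, 1 / ((n i : ℚ) - 2) < (p : ℚ) + 1}.Infinite) := by
  change ((∃ n, IsSolution p n) ↔ 2 ≤ q) ∧ (2 ≤ q → {n | IsSolution p n}.Infinite)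
  have solutions_infinite (hq : 2 ≤ q) : {n : Fin (p + q) → ℤ | IsSolution p n}.Infinite := by
    obtain ⟨r, rfl⟩ : ∃ r, q = r + 1 := ⟨q - 1, by omega⟩
    have hr : 1 ≤ r := by omega
    refine ((Set.Ioi_infinite (2 * r + 2 : ℤ)).image (solutionFamily_injective p hr).injOn).mono ?_
    rintro _ ⟨m, hm, rfl⟩
    exact isSolution_solutionFamily hr hm
  exact ⟨⟨fun ⟨_, h⟩ => two_le_of_isSolution h, fun hq => (solutions_infinite hq).nonempty⟩,
    solutions_infinite⟩
end

section
/- Let D be an n×n matrix, L an n×n matrix, μ a column vector, and λ a nonzero scalar such that μᵗ𝟙 = 1, L𝟙 = 0, 𝟙ᵗL = 0, μᵗD = λ𝟙ᵗ, D μ = λ𝟙, L D + I = μ𝟙ᵗ, and D L + I = 𝟙μᵗ. Then D is invertible and D⁻¹ = -L + (1/λ) μ μᵗ. -/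
open Matrix

theorem stmt18 (n : ℕ) (D L : Matrix (Fin n) (Fin n) ℝ) (μ : Fin n → ℝ)
    (lam : ℝ) (hlam : lam ≠ 0)
    (h1 : ∑ i, μ i = 1)
    (h2 : L *ᵥ (fun _ => 1) = 0)
    (h3 : (fun _ => (1 : ℝ)) ᵥ* L = 0)
    (h4 : μ ᵥ* D = fun _ => lam)
    (h5 : D *ᵥ μ = fun _ => lam)
    (h6 : L * D + 1 = Matrix.vecMulVec μ (fun _ => 1))
    (h7 : D * L + 1 = Matrix.vecMulVec (fun _ => 1) μ) :
    IsUnit D.det ∧ D⁻¹ = -L + lam⁻¹ • Matrix.vecMulVec μ μ := by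
  have hLD : L * D = Matrix.vecMulVec μ (fun _ => 1) - 1 := eq_sub_of_add_eq h6
  have hμμD : Matrix.vecMulVec μ μ * D = lam • Matrix.vecMulVec μ (fun _ => 1) := by
    ext i j
    have h4j : ∑ k, μ k * D k j = lam := congrFun h4 j
    simp only [Matrix.mul_apply, Matrix.vecMulVec_apply, Matrix.smul_apply, smul_eq_mul,
      mul_one]
    calc ∑ k, μ i * μ k * D k j = μ i * ∑ k, μ k * D k j := by
          rw [Finset.mul_sum]; congr 1; ext k; ring
      _ = lam * μ i := by rw [h4j]; ring
  have key : (-L + lam⁻¹ • Matrix.vecMulVec μ μ) * D = 1 := by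
    rw [add_mul, neg_mul, hLD, Matrix.smul_mul, hμμD, smul_smul, inv_mul_cancel₀ hlam,
      one_smul]
    abel
  exact ⟨Matrix.isUnit_det_of_left_inverse key, Matrix.inv_eq_left_inv key⟩
end
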